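/- Let 𝒟 : 𝒩 = 𝒩₁ ∪ ⋯ ∪ 𝒩ₖ be a pairwise min-max (PMM) decomposition such that every linkage class of 𝒩 contains at most one common complex. Then 𝒟 is incidence independent. -/
import Mathlib


open Finset

/-- The set of complexes of subnetwork `i` (complexes occurring in its reactions). -/
def cplxSet {C R : Type} (src tgt : R → C) {k : ℕ} (part : R → Fin k) (i : Fin k) : Set C :=
  {c | ∃ r, part r = i ∧ (src r = c ∨ tgt r = c)}

/-- The set of common complexes of the decomposition: complexes occurring in at least
two distinct subnetworks. -/
def commonSet {C R : Type} (src tgt : R → C) {k : ℕ} (part : R → Fin k) : Set C :=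
  {c | ∃ i j : Fin k, i ≠ j ∧ c ∈ cplxSet src tgt part i ∧ c ∈ cplxSet src tgt part j}

/-- Underlying (undirected) graph of the reaction network. -/
def parentGraph {C R : Type} (src tgt : R → C) : SimpleGraph C :=
  SimpleGraph.fromRel (fun a b => ∃ r, src r = a ∧ tgt r = b)

/-- Underlying graph of subnetwork `i`. -/
def subGraph {C R : Type} (src tgt : R → C) {k : ℕ} (part : R → Fin k) (i : Fin k) :
    SimpleGraph C :=
  SimpleGraph.fromRel (fun a b => ∃ r, part r = i ∧ src r = a ∧ tgt r = b)

/-- The incidence map `I_a : ℝ^ℛ → ℝ^𝒞`. -/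
noncomputable def incid {C R : Type} [Fintype R] [DecidableEq C] (src tgt : R → C) :
    (R → ℝ) →ₗ[ℝ] (C → ℝ) :=
  ∑ r : R, (LinearMap.toSpanSingleton ℝ (C → ℝ)
      (Pi.single (tgt r) 1 - Pi.single (src r) 1)).comp (LinearMap.proj r)

/-- The incidence map of subnetwork `i`. -/
noncomputable def incidSub {C R : Type} [Fintype R] [DecidableEq C] (src tgt : R → C)
    {k : ℕ} (part : R → Fin k) (i : Fin k) : (R → ℝ) →ₗ[ℝ] (C → ℝ) :=
  ∑ r ∈ Finset.univ.filter (fun r => part r = i),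
    (LinearMap.toSpanSingleton ℝ (C → ℝ)
      (Pi.single (tgt r) 1 - Pi.single (src r) 1)).comp (LinearMap.proj r)

/-- Incidence independence: the image of the incidence map of the parent network is
the (internal) direct sum of the images of the subnetworks' incidence maps. -/
def IncIndep {C R : Type} [Fintype R] [DecidableEq C] (src tgt : R → C)
    {k : ℕ} (part : R → Fin k) : Prop :=
  LinearMap.range (incid src tgt) = (⨆ i : Fin k, LinearMap.range (incidSub src tgt part i)) ∧
  ∀ f : Fin k → (C → ℝ), (∀ i, f i ∈ LinearMap.range (incidSub src tgt part i)) →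
    (∑ i, f i) = 0 → ∀ i, f i = 0

/-- Number of linkage classes of subnetwork `i`: connected components of its underlying
graph that meet its complex set. -/
noncomputable def numLCsub {C R : Type} (src tgt : R → C) {k : ℕ} (part : R → Fin k)
    (i : Fin k) : ℕ :=
  Nat.card {comp : (subGraph src tgt part i).ConnectedComponent //
    ∃ c ∈ cplxSet src tgt part i, (subGraph src tgt part i).connectedComponentMk c = comp}


section Aux

variable {C R : Type} [Fintype R] [DecidableEq C] (src tgt : R → C) {k : ℕ} (part : R → Fin k)

lemma incidSub_apply' (i : Fin k) (v : R → ℝ) :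
    incidSub src tgt part i v
      = ∑ r ∈ Finset.univ.filter (fun r => part r = i),
          v r • (Pi.single (tgt r) 1 - Pi.single (src r) (1 : ℝ)) := by
  simp [incidSub, LinearMap.sum_apply, LinearMap.toSpanSingleton_apply]

lemma incid_apply' (v : R → ℝ) :
    incid src tgt v = ∑ r : R, v r • (Pi.single (tgt r) 1 - Pi.single (src r) (1 : ℝ)) := by
  simp [incid, LinearMap.sum_apply, LinearMap.toSpanSingleton_apply]

lemma incidSub_support (i : Fin k) (v : R → ℝ) (c : C)
    (hc : c ∉ cplxSet src tgt part i) :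
    incidSub src tgt part i v c = 0 := by
  rw [incidSub_apply', Finset.sum_apply]
  refine Finset.sum_eq_zero fun r hr => ?_
  simp only [Finset.mem_filter, Finset.mem_univ, true_and] at hr
  have h1 : c ≠ src r := fun h => hc ⟨r, hr, Or.inl h.symm⟩
  have h2 : c ≠ tgt r := fun h => hc ⟨r, hr, Or.inr h.symm⟩
  simp [Pi.single_apply, h1, h2]

lemma incidSub_weight (hloop : ∀ r, src r ≠ tgt r) (i : Fin k) [Fintype C]
    (v : R → ℝ) (g : C → ℝ)
    (hg : ∀ a b, (subGraph src tgt part i).Adj a b → g a = g b) :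
    ∑ c : C, incidSub src tgt part i v c * g c = 0 := by
  rw [incidSub_apply']
  simp only [Finset.sum_apply, Pi.smul_apply, Pi.sub_apply, smul_eq_mul,
    Finset.sum_mul]
  rw [Finset.sum_comm]
  refine Finset.sum_eq_zero fun r hr => ?_
  simp only [Finset.mem_filter, Finset.mem_univ, true_and] at hr
  have hadj : (subGraph src tgt part i).Adj (src r) (tgt r) := by
    rw [subGraph, SimpleGraph.fromRel_adj]
    exact ⟨hloop r, Or.inl ⟨r, hr, rfl, rfl⟩⟩
  have hgr : g (src r) = g (tgt r) := hg _ _ hadj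
  simp only [Pi.single_apply, sub_mul, mul_sub, ite_mul, one_mul, zero_mul,
    mul_ite, mul_zero, mul_one, Finset.sum_sub_distrib, Finset.sum_ite_eq',
    Finset.mem_univ, if_true]
  rw [hgr]
  ring

lemma sub_le_parent (i : Fin k) : subGraph src tgt part i ≤ parentGraph src tgt := by
  intro a b hab
  rw [subGraph, SimpleGraph.fromRel_adj] at hab
  rw [parentGraph, SimpleGraph.fromRel_adj]
  refine ⟨hab.1, ?_⟩
  rcases hab.2 with ⟨r, _, h1, h2⟩ | ⟨r, _, h1, h2⟩
  · exact Or.inl ⟨r, h1, h2⟩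
  · exact Or.inr ⟨r, h1, h2⟩

end Aux
/-- a pairwise min-max (PMM) decomposition (every pairwise intersection of
complex sets is either empty or the whole set of common complexes) such that every
linkage class of `𝒩` contains at most one common complex is incidence independent. -/
theorem stmt13 {C R : Type} [Fintype C] [Fintype R] [DecidableEq C]
    (src tgt : R → C)
    (hloop : ∀ r, src r ≠ tgt r)
    (hiso : ∀ c : C, ∃ r, src r = c ∨ tgt r = c)
    {k : ℕ} (part : R → Fin k)
    (hPMM : ∀ i j : Fin k, i ≠ j →
      cplxSet src tgt part i ∩ cplxSet src tgt part j = ∅ ∨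
      cplxSet src tgt part i ∩ cplxSet src tgt part j = commonSet src tgt part)
    (hone : ∀ c c' : C, c ∈ commonSet src tgt part → c' ∈ commonSet src tgt part →
      (parentGraph src tgt).connectedComponentMk c =
        (parentGraph src tgt).connectedComponentMk c' → c = c') :
    IncIndep src tgt part := by
  classical
  constructor
  · -- range equality
    have hsum : incid src tgt = ∑ i : Fin k, incidSub src tgt part i := by
      unfold incid incidSub
      rw [Finset.sum_fiberwise]
    apply le_antisymm
    · rintro x ⟨v, rfl⟩
      rw [hsum, LinearMap.sum_apply]
      exact Submodule.sum_mem _ fun i _ => Submodule.mem_iSup_of_mem i ⟨v, rfl⟩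
    · refine iSup_le fun i => ?_
      rintro x ⟨v, rfl⟩
      refine ⟨fun r => if part r = i then v r else 0, ?_⟩
      rw [incid_apply', incidSub_apply', Finset.sum_filter]
      refine Finset.sum_congr rfl fun r _ => ?_
      by_cases h : part r = i <;> simp [h]
  · intro f hf hsum0
    have step1 : ∀ j c, c ∉ commonSet src tgt part → f j c = 0 := by
      intro j c hc
      by_contra hne
      obtain ⟨w, hw⟩ := hf j
      have hcj : c ∈ cplxSet src tgt part j := by
        by_contra h
        exact hne (hw ▸ incidSub_support src tgt part j w c h)
      have hzero : ∀ j' : Fin k, j' ≠ j → f j' c = 0 := by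
        intro j' hj'
        obtain ⟨w', hw'⟩ := hf j'
        by_contra h
        have hcj' : c ∈ cplxSet src tgt part j' := by
          by_contra h'
          exact h (hw' ▸ incidSub_support src tgt part j' w' c h')
        exact hc ⟨j', j, hj', hcj', hcj⟩
      have hs : (∑ j', f j') c = f j c := by
        rw [Finset.sum_apply]
        exact Finset.sum_eq_single j (fun b _ hb => hzero b hb) (by simp)
      rw [hsum0] at hs
      exact hne (by simpa using hs.symm)
    intro i
    obtain ⟨v, hv⟩ := hf i
    funext c
    show f i c = 0
    by_cases hc : c ∈ commonSet src tgt part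
    · set G := subGraph src tgt part i with hG
      set g : C → ℝ := fun c' =>
        if G.connectedComponentMk c' = G.connectedComponentMk c then 1 else 0 with hgdef
      have hg : ∀ a b, G.Adj a b → g a = g b := by
        intro a b hab
        have h : G.connectedComponentMk a = G.connectedComponentMk b :=
          SimpleGraph.ConnectedComponent.sound hab.reachable
        simp only [hgdef, h]
      have hw := incidSub_weight src tgt part hloop i v g hg
      rw [hv] at hw
      have hkey : ∑ c' : C, f i c' * g c' = f i c := by
        rw [Finset.sum_eq_single c]
        · simp only [hgdef]
          simp
        · intro b _ hb
          by_cases hbK : G.connectedComponentMk b = G.connectedComponentMk c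
          · by_cases hbc : b ∈ commonSet src tgt part
            · exfalso
              have hreach : G.Reachable b c := SimpleGraph.ConnectedComponent.exact hbK
              have hpar : (parentGraph src tgt).connectedComponentMk b =
                  (parentGraph src tgt).connectedComponentMk c :=
                SimpleGraph.ConnectedComponent.sound
                  (hreach.mono (sub_le_parent src tgt part i))
              exact hb (hone b c hbc hc hpar)
            · simp [step1 i b hbc]
          · simp only [hgdef]
            rw [if_neg hbK, mul_zero]
        · simp
      rw [hkey] at hw
      exact hw
    · exact step1 i c hc
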